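/- Fix a real ε with 0 < ε < 1 and integers m ≥ 2, n ≥ 1. Set d = ⌈2·(log₂ m)/ε⌉, s = 2·d²·n, and k = ⌈ε·d⌉. Then for every set T ⊆ Fin s with |T| ≤ d·n, the number of functions g : Fin d → Fin s such that |{i : Fin d | g i ∈ T}| ≥ k is at most s^d / m². -/

import Mathlib

/-!
A function with at least `k` indices landing in `T` is determined, up to overcounting, by a
`k`-set `S` of such indices, the values on `S` (in `T`) and the remaining values. Hence there are
at most `C(d, k) |T|^k s^(d-k) ≤ d^k (dn)^k s^(d-k) = s^d / 2^k` of them, since `s = 2d²n`.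
Finally `k ≥ ε d ≥ 2 log₂ m`, so `2^k ≥ m²`.
-/

open Finset

section Counting

variable {ι α : Type*} [Fintype ι] [DecidableEq ι] [Fintype α]

theorem card_piFinset_ite_mem (T : Finset α) (S : Finset ι) :
    #(Fintype.piFinset fun i => if i ∈ S then T else univ) =
      #T ^ #S * Fintype.card α ^ (Fintype.card ι - #S) := by
  simp only [Fintype.card_piFinset, apply_ite, card_univ, prod_ite, prod_const,
    filter_mem_eq_inter, univ_inter, filter_not, card_univ_sdiff]

variable [DecidableEq α]

theorem filter_le_card_filter_mem_subset_biUnion (T : Finset α) (k : ℕ) :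
    ({g : ι → α | k ≤ #{i | g i ∈ T}} : Finset (ι → α)) ⊆
      (powersetCard k univ).biUnion fun S =>
        Fintype.piFinset fun i => if i ∈ S then T else univ := by
  intro g hg
  obtain ⟨S, hST, hSk⟩ := exists_subset_card_eq (mem_filter.mp hg).2
  refine mem_biUnion.mpr ⟨S, mem_powersetCard.mpr ⟨subset_univ S, hSk⟩, ?_⟩
  refine Fintype.mem_piFinset.mpr fun i => ?_
  split_ifs with hi
  · exact (mem_filter.mp (hST hi)).2
  · exact mem_univ _

theorem ncard_setOf_le_card_filter_mem_le (T : Finset α) (k : ℕ) :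
    {g : ι → α | k ≤ #{i | g i ∈ T}}.ncard ≤
      (Fintype.card ι).choose k * (#T ^ k * Fintype.card α ^ (Fintype.card ι - k)) := by
  rw [Set.ncard_eq_toFinset_card', Set.toFinset_ofPred]
  calc _ ≤ #((powersetCard k univ).biUnion fun S =>
          Fintype.piFinset fun i => if i ∈ S then T else univ) :=
        card_le_card (filter_le_card_filter_mem_subset_biUnion T k)
    _ ≤ ∑ S ∈ powersetCard k (univ : Finset ι),
          #(Fintype.piFinset fun i => if i ∈ S then T else univ) := card_biUnion_le
    _ = _ := by
      rw [sum_congr rfl fun S hS => by rw [card_piFinset_ite_mem, (mem_powersetCard.mp hS).2],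
        sum_const, card_powersetCard, card_univ, smul_eq_mul]

end Counting

theorem two_mul_sq_mul_pow_eq {d k : ℕ} (n : ℕ) (hkd : k ≤ d) :
    (2 * d ^ 2 * n) ^ d = 2 ^ k * (d ^ k * ((d * n) ^ k * (2 * d ^ 2 * n) ^ (d - k))) := by
  rw [← pow_mul_pow_sub _ hkd]
  ring

theorem sq_le_two_pow_of_two_mul_logb_le {x : ℝ} {k : ℕ} (hx : 0 < x)
    (h : 2 * Real.logb 2 x ≤ k) : x ^ 2 ≤ 2 ^ k := by
  calc x ^ 2 = (2 : ℝ) ^ (2 * Real.logb 2 x) := by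
        rw [mul_comm, Real.rpow_mul zero_le_two, Real.rpow_logb two_pos (by norm_num) hx]
        norm_cast
    _ ≤ (2 : ℝ) ^ (k : ℝ) := Real.rpow_le_rpow_of_exponent_le one_le_two h
    _ = 2 ^ k := Real.rpow_natCast 2 k

theorem stmt_8_general (ε : ℝ) (hε0 : 0 < ε) (hε1 : ε < 1) (m n : ℕ) (hm : 2 ≤ m)
    (d s k : ℕ) (hd : d = ⌈2 * Real.logb 2 m / ε⌉₊) (hs : s = 2 * d ^ 2 * n)
    (hk : k = ⌈ε * d⌉₊)
    (T : Finset (Fin s)) (hT : T.card ≤ d * n) :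
    (({g : Fin d → Fin s |
        k ≤ (Finset.univ.filter (fun i : Fin d => g i ∈ T)).card}).ncard : ℝ)
      ≤ (s : ℝ) ^ d / (m : ℝ) ^ 2 := by
  have hkd : k ≤ d := hk ▸ Nat.ceil_le.mpr (mul_le_of_le_one_left d.cast_nonneg hε1.le)
  have hlog : 2 * Real.logb 2 m ≤ k := by
    have hd' : 2 * Real.logb 2 m / ε ≤ d := hd ▸ Nat.le_ceil _
    calc 2 * Real.logb 2 m ≤ ε * d := (div_le_iff₀' hε0).mp hd'
      _ ≤ k := hk ▸ Nat.le_ceil _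
  have hcount : 2 ^ k * {g : Fin d → Fin s | k ≤ #{i : Fin d | g i ∈ T}}.ncard ≤ s ^ d :=
    calc _ ≤ 2 ^ k * (d.choose k * (#T ^ k * s ^ (d - k))) := by
          gcongr; simpa using ncard_setOf_le_card_filter_mem_le (ι := Fin d) T k
      _ ≤ 2 ^ k * (d ^ k * ((d * n) ^ k * s ^ (d - k))) := by
          gcongr
          exact d.choose_le_pow k
      _ = s ^ d := by rw [hs, two_mul_sq_mul_pow_eq n hkd]
  calc _ ≤ (s : ℝ) ^ d / 2 ^ k := by
        rw [le_div_iff₀ (by positivity), mul_comm]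
        exact_mod_cast hcount
    _ ≤ (s : ℝ) ^ d / (m : ℝ) ^ 2 :=
      div_le_div_of_nonneg_left (by positivity) (by positivity)
        (sq_le_two_pow_of_two_mul_logb_le (by positivity) hlog)

theorem stmt_8 (ε : ℝ) (hε0 : 0 < ε) (hε1 : ε < 1) (m n : ℕ) (hm : 2 ≤ m) (hn : 1 ≤ n)
    (d s k : ℕ) (hd : d = ⌈2 * Real.logb 2 m / ε⌉₊) (hs : s = 2 * d ^ 2 * n)
    (hk : k = ⌈ε * d⌉₊)
    (T : Finset (Fin s)) (hT : T.card ≤ d * n) :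
    (({g : Fin d → Fin s |
        k ≤ (Finset.univ.filter (fun i : Fin d => g i ∈ T)).card}).ncard : ℝ)
      ≤ (s : ℝ) ^ d / (m : ℝ) ^ 2 :=
  stmt_8_general ε hε0 hε1 m n hm d s k hd hs hk T hT
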